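/- arXiv:1411.1254 — 2 statements merged into one kernel-verified Lean document; each statement's English description precedes it below -/
import Mathlib

section
/- Let $(c_n)_{n\geq 0}$ and $(b_n)_{n\geq 0}$ be sequences of complex numbers with finite $1$-variation and finite $q$-variation respectively, where $1 \leq q < \infty$. Then the pointwise product sequence $(c_n b_n)_{n\geq 0}$ satisfies $\|(c_n b_n)_{n\geq 0}\|_{v_q} \leq 3 \|(c_n)_{n\geq 0}\|_{v_1} \|(b_n)_{n\geq 0}\|_{v_q}$. -/
open scoped ENNReal NNReal

open scoped ENNReal NNReal

/-- The `q`-variation norm of a sequence of complex numbers: the supremum, over all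
(strictly) increasing sequences `(n_k)` of nonnegative integers, of
`(|a_{n_0}|^q + ∑_{k≥1} |a_{n_k} - a_{n_{k-1}}|^q)^{1/q}`. -/
noncomputable def vqNorm (q : ℝ) (a : ℕ → ℂ) : ℝ≥0∞ :=
  ⨆ (n : ℕ → ℕ) (_ : StrictMono n),
    ((‖a (n 0)‖₊ : ℝ≥0∞) ^ q +
      ∑' k : ℕ, (‖a (n (k + 1)) - a (n k)‖₊ : ℝ≥0∞) ^ q) ^ (1 / q)

/-- Minkowski's inequality for `tsum` in `ℝ≥0∞`. -/
lemma vq_tsum_Lp_add_le {p : ℝ} (hp : 1 ≤ p) (f g : ℕ → ℝ≥0∞) :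
    (∑' i, (f i + g i) ^ p) ^ (1 / p) ≤
      (∑' i, f i ^ p) ^ (1 / p) + (∑' i, g i ^ p) ^ (1 / p) := by
  have hp0 : 0 < p := lt_of_lt_of_le one_pos hp
  set A := (∑' i, f i ^ p) ^ (1 / p)
  set B := (∑' i, g i ^ p) ^ (1 / p)
  have key : ∑' i, (f i + g i) ^ p ≤ (A + B) ^ p := by
    rw [ENNReal.tsum_eq_iSup_sum]
    refine iSup_le fun s => ?_
    have h1 : (∑ i ∈ s, (f i + g i) ^ p) ^ (1 / p) ≤
        (∑ i ∈ s, f i ^ p) ^ (1 / p) + (∑ i ∈ s, g i ^ p) ^ (1 / p) :=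
      ENNReal.Lp_add_le s f g hp
    have h2 : (∑ i ∈ s, f i ^ p) ^ (1 / p) + (∑ i ∈ s, g i ^ p) ^ (1 / p) ≤ A + B := by
      refine add_le_add ?_ ?_ <;>
        exact ENNReal.rpow_le_rpow (ENNReal.sum_le_tsum s) (by positivity)
    have h3 := ENNReal.rpow_le_rpow (le_trans h1 h2) hp0.le
    rwa [← ENNReal.rpow_mul, one_div, inv_mul_cancel₀ hp0.ne', ENNReal.rpow_one] at h3
  have h4 := ENNReal.rpow_le_rpow key (by positivity : (0:ℝ) ≤ 1 / p)
  rwa [← ENNReal.rpow_mul, mul_one_div_cancel hp0.ne', ENNReal.rpow_one] at h4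

/-- `ℓ¹ ⊆ ℓᵖ` for `ℝ≥0∞`-valued sums. -/
lemma vq_tsum_rpow_le {p : ℝ} (hp : 1 ≤ p) (f : ℕ → ℝ≥0∞) :
    ∑' i, f i ^ p ≤ (∑' i, f i) ^ p := by
  have hp0 : 0 < p := lt_of_lt_of_le one_pos hp
  set S := ∑' i, f i with hS
  rcases eq_or_ne S ⊤ with hT | hT
  · rw [hT, ENNReal.top_rpow_of_pos hp0]; exact le_top
  rcases eq_or_ne S 0 with h0 | h0
  · have hf0 : ∀ i, f i = 0 := by
      intro i
      exact le_antisymm (h0 ▸ ENNReal.le_tsum i) zero_le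
    simp [hf0, ENNReal.zero_rpow_of_pos hp0]
  calc ∑' i, f i ^ p ≤ ∑' i, S ^ (p - 1) * f i := by
        refine ENNReal.tsum_le_tsum fun i => ?_
        rcases eq_or_ne (f i) 0 with h | h
        · rw [h, ENNReal.zero_rpow_of_pos hp0]; exact zero_le
        have hfS : f i ≤ S := ENNReal.le_tsum i
        have hft : f i ≠ ⊤ := ne_top_of_le_ne_top hT hfS
        calc f i ^ p = f i ^ (p - 1) * f i := by
              conv_lhs => rw [show p = (p - 1) + 1 by ring]
              rw [ENNReal.rpow_add _ _ h hft, ENNReal.rpow_one]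
          _ ≤ S ^ (p - 1) * f i :=
              mul_le_mul_left (ENNReal.rpow_le_rpow hfS (by linarith)) _
    _ = S ^ (p - 1) * S := by rw [ENNReal.tsum_mul_left]
    _ = S ^ p := by
        rw [← ENNReal.rpow_one S, ← ENNReal.rpow_mul, ← ENNReal.rpow_add _ _ h0 hT]
        norm_num

lemma vq_body_le (q : ℝ) (a : ℕ → ℂ) (n : ℕ → ℕ) (hn : StrictMono n) :
    ((‖a (n 0)‖₊ : ℝ≥0∞) ^ q +
      ∑' k : ℕ, (‖a (n (k + 1)) - a (n k)‖₊ : ℝ≥0∞) ^ q) ^ (1 / q) ≤ vqNorm q a := by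
  unfold vqNorm
  exact le_iSup₂ (f := fun (n : ℕ → ℕ) (_ : StrictMono n) =>
    ((‖a (n 0)‖₊ : ℝ≥0∞) ^ q +
      ∑' k : ℕ, (‖a (n (k + 1)) - a (n k)‖₊ : ℝ≥0∞) ^ q) ^ (1 / q)) n hn

lemma vq_norm_le (q : ℝ) (hq : 1 ≤ q) (a : ℕ → ℂ) (m : ℕ) :
    (‖a m‖₊ : ℝ≥0∞) ≤ vqNorm q a := by
  have hq0 : 0 < q := lt_of_lt_of_le one_pos hq
  have hmono : StrictMono (fun k => m + k) := fun i j h => by simpa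
  refine le_trans ?_ (vq_body_le q a (fun k => m + k) hmono)
  have h1 : (‖a m‖₊ : ℝ≥0∞) = ((‖a m‖₊ : ℝ≥0∞) ^ q) ^ (1 / q) := by
    rw [← ENNReal.rpow_mul, mul_one_div_cancel hq0.ne', ENNReal.rpow_one]
  rw [h1]
  refine ENNReal.rpow_le_rpow ?_ (by positivity)
  simpa using le_add_right (le_refl ((‖a (m + 0)‖₊ : ℝ≥0∞) ^ q))

lemma vq_var_le (c : ℕ → ℂ) (n : ℕ → ℕ) (hn : StrictMono n) :
    ∑' k : ℕ, (‖c (n (k + 1)) - c (n k)‖₊ : ℝ≥0∞) ≤ vqNorm 1 c := by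
  refine le_trans ?_ (vq_body_le 1 c n hn)
  simp only [ENNReal.rpow_one, one_div, inv_one]
  exact le_add_left (le_refl _)

set_option maxHeartbeats 1000000 in
/-- if `(c_n)` has finite `1`-variation and `(b_n)` has finite
`q`-variation (`1 ≤ q < ∞`), then the pointwise product satisfies
`‖(c_n b_n)‖_{v_q} ≤ 3 ‖(c_n)‖_{v_1} ‖(b_n)‖_{v_q}`. -/
theorem vqNorm_mul_le (q : ℝ) (hq : 1 ≤ q) (c b : ℕ → ℂ)
    (hc : vqNorm 1 c < ∞) (hb : vqNorm q b < ∞) :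
    vqNorm q (fun n => c n * b n) ≤ 3 * vqNorm 1 c * vqNorm q b := by
  have hq0 : 0 < q := lt_of_lt_of_le one_pos hq
  set C := vqNorm 1 c with hC
  set B := vqNorm q b with hB
  have hCb : ∀ m, (‖c m‖₊ : ℝ≥0∞) ≤ C := fun m => vq_norm_le 1 le_rfl c m
  have hBb : ∀ m, (‖b m‖₊ : ℝ≥0∞) ≤ B := fun m => vq_norm_le q hq b m
  rw [vqNorm]
  refine iSup₂_le fun n hn => ?_
  show ((‖c (n 0) * b (n 0)‖₊ : ℝ≥0∞) ^ q +
      ∑' k : ℕ, (‖c (n (k + 1)) * b (n (k + 1)) - c (n k) * b (n k)‖₊ : ℝ≥0∞) ^ q) ^ (1 / q)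
    ≤ 3 * C * B
  -- the sequences
  set f : ℕ → ℝ≥0∞ := fun i => Nat.casesOn i (‖c (n 0) * b (n 0)‖₊ : ℝ≥0∞)
    (fun k => (‖c (n (k + 1)) * b (n (k + 1)) - c (n k) * b (n k)‖₊ : ℝ≥0∞)) with hf
  set u : ℕ → ℝ≥0∞ := fun i => Nat.casesOn i (C * ‖b (n 0)‖₊)
    (fun k => C * ‖b (n (k + 1)) - b (n k)‖₊) with hu
  set v : ℕ → ℝ≥0∞ := fun i => Nat.casesOn i 0
    (fun k => (‖c (n (k + 1)) - c (n k)‖₊ : ℝ≥0∞) * B) with hv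
  have hsplit : ∀ g : ℕ → ℝ≥0∞, ∑' i, g i = g 0 + ∑' k, g (k + 1) := fun g =>
    tsum_eq_zero_add' ENNReal.summable
  have hfuv : ∀ i, f i ≤ u i + v i := by
    intro i
    cases i with
    | zero =>
        show (‖c (n 0) * b (n 0)‖₊ : ℝ≥0∞) ≤ C * (‖b (n 0)‖₊ : ℝ≥0∞) + 0
        rw [add_zero, nnnorm_mul, ENNReal.coe_mul]
        exact mul_le_mul_left (hCb (n 0)) _
    | succ k =>
        have hdecomp : c (n (k + 1)) * b (n (k + 1)) - c (n k) * b (n k) =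
            c (n (k + 1)) * (b (n (k + 1)) - b (n k)) +
              (c (n (k + 1)) - c (n k)) * b (n k) := by ring
        show (‖c (n (k + 1)) * b (n (k + 1)) - c (n k) * b (n k)‖₊ : ℝ≥0∞) ≤
          C * (‖b (n (k + 1)) - b (n k)‖₊ : ℝ≥0∞) +
            (‖c (n (k + 1)) - c (n k)‖₊ : ℝ≥0∞) * B
        calc (‖c (n (k + 1)) * b (n (k + 1)) - c (n k) * b (n k)‖₊ : ℝ≥0∞)
            ≤ (‖c (n (k + 1)) * (b (n (k + 1)) - b (n k))‖₊ : ℝ≥0∞) +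
              ‖(c (n (k + 1)) - c (n k)) * b (n k)‖₊ := by
              rw [hdecomp]
              exact_mod_cast nnnorm_add_le _ _
          _ ≤ C * ‖b (n (k + 1)) - b (n k)‖₊ + (‖c (n (k + 1)) - c (n k)‖₊ : ℝ≥0∞) * B := by
              rw [nnnorm_mul, nnnorm_mul]
              push_cast
              exact add_le_add (mul_le_mul_left (hCb _) _) (mul_le_mul_right (hBb _) _)
  have hgoal1 : ((‖c (n 0) * b (n 0)‖₊ : ℝ≥0∞) ^ q +
      ∑' k : ℕ, (‖c (n (k + 1)) * b (n (k + 1)) - c (n k) * b (n k)‖₊ : ℝ≥0∞) ^ q) ^ (1 / q)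
      = (∑' i, f i ^ q) ^ (1 / q) := by
    rw [hsplit fun i => f i ^ q]
    rfl
  rw [hgoal1]
  have step1 : (∑' i, f i ^ q) ^ (1 / q) ≤ (∑' i, (u i + v i) ^ q) ^ (1 / q) := by
    refine ENNReal.rpow_le_rpow (ENNReal.tsum_le_tsum fun i => ?_) (by positivity)
    exact ENNReal.rpow_le_rpow (hfuv i) hq0.le
  have step2 : (∑' i, (u i + v i) ^ q) ^ (1 / q) ≤
      (∑' i, u i ^ q) ^ (1 / q) + (∑' i, v i ^ q) ^ (1 / q) := vq_tsum_Lp_add_le hq u v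
  have stepu : (∑' i, u i ^ q) ^ (1 / q) ≤ C * B := by
    have h1 : ∑' i, u i ^ q = C ^ q * ((‖b (n 0)‖₊ : ℝ≥0∞) ^ q +
        ∑' k : ℕ, (‖b (n (k + 1)) - b (n k)‖₊ : ℝ≥0∞) ^ q) := by
      rw [hsplit fun i => u i ^ q]
      show (C * (‖b (n 0)‖₊ : ℝ≥0∞)) ^ q +
          ∑' k : ℕ, (C * (‖b (n (k + 1)) - b (n k)‖₊ : ℝ≥0∞)) ^ q = _
      rw [ENNReal.mul_rpow_of_nonneg _ _ hq0.le, mul_add]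
      congr 1
      rw [← ENNReal.tsum_mul_left]
      exact tsum_congr fun k => ENNReal.mul_rpow_of_nonneg _ _ hq0.le
    rw [h1, ENNReal.mul_rpow_of_nonneg _ _ (by positivity : (0:ℝ) ≤ 1 / q),
      ← ENNReal.rpow_mul, mul_one_div_cancel hq0.ne', ENNReal.rpow_one]
    exact mul_le_mul_right (vq_body_le q b n hn) C
  have stepv : (∑' i, v i ^ q) ^ (1 / q) ≤ C * B := by
    have h1 : ∑' i, v i ^ q =
        (∑' k : ℕ, (‖c (n (k + 1)) - c (n k)‖₊ : ℝ≥0∞) ^ q) * B ^ q := by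
      rw [hsplit fun i => v i ^ q]
      show (0 : ℝ≥0∞) ^ q +
          ∑' k : ℕ, ((‖c (n (k + 1)) - c (n k)‖₊ : ℝ≥0∞) * B) ^ q = _
      rw [ENNReal.zero_rpow_of_pos hq0, zero_add, ← ENNReal.tsum_mul_right]
      exact tsum_congr fun k => ENNReal.mul_rpow_of_nonneg _ _ hq0.le
    have h2 : ∑' i, v i ^ q ≤ C ^ q * B ^ q := by
      rw [h1]
      refine mul_le_mul_left ?_ _
      refine le_trans (vq_tsum_rpow_le hq _) ?_
      exact ENNReal.rpow_le_rpow (vq_var_le c n hn) hq0.le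
    calc (∑' i, v i ^ q) ^ (1 / q) ≤ (C ^ q * B ^ q) ^ (1 / q) :=
          ENNReal.rpow_le_rpow h2 (by positivity)
      _ = C * B := by
          rw [ENNReal.mul_rpow_of_nonneg _ _ (by positivity : (0:ℝ) ≤ 1 / q),
            ← ENNReal.rpow_mul, ← ENNReal.rpow_mul, mul_one_div_cancel hq0.ne',
            ENNReal.rpow_one, ENNReal.rpow_one]
  calc (∑' i, f i ^ q) ^ (1 / q) ≤ (∑' i, u i ^ q) ^ (1 / q) + (∑' i, v i ^ q) ^ (1 / q) :=
        le_trans step1 step2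
    _ ≤ C * B + C * B := add_le_add stepu stepv
    _ = 2 * (C * B) := (two_mul _).symm
    _ ≤ 3 * (C * B) := mul_le_mul_left (by norm_num) _
    _ = 3 * C * B := by ring
end

section
/- Let $T$ be a bounded linear operator on a Banach space. For every integer $n \geq 1$, the identity $T^{2n+1} = \frac{1}{n}\sum_{j=n}^{2n}(j+1)T^j(T-I) - \frac{n+1}{n}(T^{2n+1}-T^n) + \frac{2n+1}{n}M_{2n}(T) - \frac{n+1}{n}M_n(T)$ holds, where $M_n(T) = \frac{1}{n+1}\sum_{k=0}^n T^k$. -/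
/-- The `n`-th ergodic average `M_n(T) = (1/(n+1)) ∑_{k=0}^n T^k` of a bounded operator. -/
noncomputable def ergAvg {X : Type*} [NormedAddCommGroup X] [NormedSpace ℂ X]
    (T : X →L[ℂ] X) (n : ℕ) : X →L[ℂ] X :=
  ((n : ℂ) + 1)⁻¹ • ∑ k ∈ Finset.range (n + 1), T ^ k

/-- Abel-summation / telescoping identity:
`∑_{j=a}^{b-1} (j+1) T^j (T-1) = b T^b - a T^a - ∑_{j=a}^{b-1} T^j`. -/
lemma telescope_aux {X : Type*} [NormedAddCommGroup X] [NormedSpace ℂ X]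
    (T : X →L[ℂ] X) (a b : ℕ) (h : a ≤ b) :
    ∑ j ∈ Finset.Ico a b, ((j : ℂ) + 1) • (T ^ j * (T - 1)) =
      (b : ℂ) • T ^ b - (a : ℂ) • T ^ a - ∑ j ∈ Finset.Ico a b, T ^ j := by
  induction b, h using Nat.le_induction with
  | base => simp
  | succ b hb ih =>
    rw [Finset.sum_Ico_succ_top (by omega), Finset.sum_Ico_succ_top (by omega), ih]
    have : T ^ b * (T - 1) = T ^ (b + 1) - T ^ b := by
      rw [mul_sub, mul_one, ← pow_succ]
    rw [this]
    push_cast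
    module

/-- for a bounded operator `T` on a Banach space and every integer `n ≥ 1`,
`T^{2n+1} = (1/n) ∑_{j=n}^{2n} (j+1) T^j (T-I) - ((n+1)/n)(T^{2n+1} - T^n)
  + ((2n+1)/n) M_{2n}(T) - ((n+1)/n) M_n(T)`. -/
theorem pow_eq_combination {X : Type*} [NormedAddCommGroup X] [NormedSpace ℂ X]
    [CompleteSpace X] (T : X →L[ℂ] X) (n : ℕ) (hn : 1 ≤ n) :
    T ^ (2 * n + 1) =
      ((n : ℂ))⁻¹ • (∑ j ∈ Finset.Icc n (2 * n), ((j : ℂ) + 1) • (T ^ j * (T - 1)))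
        - (((n : ℂ) + 1) / n) • (T ^ (2 * n + 1) - T ^ n)
        + ((2 * (n : ℂ) + 1) / n) • ergAvg T (2 * n)
        - (((n : ℂ) + 1) / n) • ergAvg T n := by
  have hn0 : (n : ℂ) ≠ 0 := Nat.cast_ne_zero.2 (by omega)
  have h1 : Finset.Icc n (2 * n) = Finset.Ico n (2 * n + 1) := by
    rw [Finset.Ico_add_one_right_eq_Icc]
  rw [h1, telescope_aux T n (2 * n + 1) (by omega), ergAvg, ergAvg]
  have h2 : ∑ j ∈ Finset.Ico n (2 * n + 1), T ^ j
      = T ^ n + ∑ j ∈ Finset.Ico (n + 1) (2 * n + 1), T ^ j := by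
    rw [Finset.sum_eq_sum_Ico_succ_bot (by omega)]
  have h3 : ∑ k ∈ Finset.range (2 * n + 1), T ^ k
      = ∑ k ∈ Finset.range (n + 1), T ^ k + ∑ j ∈ Finset.Ico (n + 1) (2 * n + 1), T ^ j := by
    rw [Finset.range_eq_Ico, Finset.range_eq_Ico,
      Finset.sum_Ico_consecutive _ (by omega) (by omega : n + 1 ≤ 2 * n + 1)]
  rw [h2, h3]
  have h21 : (2 * (n : ℂ) + 1) ≠ 0 := by
    have h : ((2 * n + 1 : ℕ) : ℂ) ≠ 0 := Nat.cast_ne_zero.2 (by omega)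
    intro h'; apply h; push_cast; linear_combination h'
  have h11 : ((n : ℂ) + 1) ≠ 0 := by
    have h : ((n + 1 : ℕ) : ℂ) ≠ 0 := Nat.cast_ne_zero.2 (by omega)
    intro h'; apply h; push_cast; linear_combination h'
  push_cast
  match_scalars <;> field_simp [show (n : ℂ) * 2 + 1 ≠ 0 by rw [mul_comm]; exact h21] <;> ring
end
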